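/- (Exponential solution of the commutative Master Equation.) Assume additionally that g is continuous, and define Γ(t) = ∫_0^t g(s)² ds and ℋ_t = c t H + Γ(t) δH. Then the family Λ_t := exp( −i[ℋ_t, ·] + Γ(t) D ), where exp is the exponential in the Banach algebra of linear maps on M_d(ℂ), satisfies Λ_0 = id and dΛ_t/dt = L_t ∘ Λ_t for every t ∈ ℝ. -/

import Mathlib

open Matrix

noncomputable section

attribute [local instance] Matrix.normedAddCommGroup Matrix.normedSpace

/-- The topology of the norm above, so that the topology and norm instances agree definitionally
(it is the product topology). -/
abbrev matrixNormTopology {n : Type*} [Fintype n] : TopologicalSpace (Matrix n n ℂ) :=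
  (Matrix.normedAddCommGroup : NormedAddCommGroup (Matrix n n ℂ)).toSeminormedAddCommGroup.toPseudoMetricSpace.toUniformSpace.toTopologicalSpace

attribute [local instance] matrixNormTopology

/-- The commutator derivation `ρ ↦ −i[B, ρ]`, as a continuous linear map. -/
def adL {n : Type*} [Fintype n] [DecidableEq n] (B : Matrix n n ℂ) :
    Matrix n n ℂ →L[ℂ] Matrix n n ℂ :=
  LinearMap.toContinuousLinearMap
    ((-Complex.I) • (LinearMap.mulLeft ℂ B - LinearMap.mulRight ℂ B))

/-!
With `M = −i[H, ·]` and `N = −i[δH, ·] + D`, the generator of `Λ_t` is `c t • M + Γ(t) • N`. The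
hypotheses make `M` and `N` commute, so `Λ_t = exp (c t • M) * exp (Γ(t) • N)`, and the product rule
together with `Γ' = g²` gives `Λ_t' = (c • M + g(t)² • N) * Λ_t = L_t ∘ Λ_t`.
-/

open NormedSpace

section ExpAlongCommutingPlane

variable {𝕂 𝔸 : Type*} [RCLike 𝕂] [NormedRing 𝔸] [NormedAlgebra 𝕂 𝔸] [NormedAlgebra ℝ 𝔸]
  [IsScalarTower ℝ 𝕂 𝔸] [CompleteSpace 𝔸]

theorem hasDerivAt_exp_smul_comp {M : 𝔸} {α : ℝ → 𝕂} {α' : 𝕂} {t : ℝ}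
    (hα : HasDerivAt α α' t) :
    HasDerivAt (fun u ↦ exp (α u • M)) (α' • (M * exp (α t • M))) t :=
  (hasDerivAt_exp_smul_const' M (α t)).scomp t hα

theorem hasDerivAt_exp_smul_add_smul {M N : 𝔸} (hMN : Commute M N) {α β : ℝ → 𝕂} {α' β' : 𝕂}
    {t : ℝ} (hα : HasDerivAt α α' t) (hβ : HasDerivAt β β' t) :
    HasDerivAt (fun u ↦ exp (α u • M + β u • N))
      ((α' • M + β' • N) * exp (α t • M + β t • N)) t := by
  -- `exp_add_of_commute` is stated for Banach algebras over `ℚ`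
  let _ : NormedAlgebra ℚ 𝔸 := NormedAlgebra.restrictScalars ℚ 𝕂 𝔸
  have hsplit : ∀ u, exp (α u • M + β u • N) = exp (α u • M) * exp (β u • N) := fun u ↦
    exp_add_of_commute ((hMN.smul_left _).smul_right _)
  have hNE : Commute N (exp (α t • M)) := (hMN.symm.smul_right _).exp_right
  simp only [hsplit]
  refine ((hasDerivAt_exp_smul_comp (M := M) hα).mul
    (hasDerivAt_exp_smul_comp (M := N) hβ)).congr_deriv ?_
  rw [mul_smul_comm, ← mul_assoc _ N, ← hNE.eq]
  simp only [add_mul, smul_mul_assoc, mul_assoc]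

end ExpAlongCommutingPlane

section Commutator

variable {n : Type*} [Fintype n] [DecidableEq n]

@[simp]
theorem adL_apply (B ρ : Matrix n n ℂ) : adL B ρ = (-Complex.I) • (B * ρ - ρ * B) := by
  simp [adL, LinearMap.mulLeft_apply, LinearMap.mulRight_apply]

theorem adL_add (A B : Matrix n n ℂ) : adL (A + B) = adL A + adL B := by
  ext1 ρ
  simp only [adL_apply, _root_.add_apply, add_mul, mul_add]
  module

theorem adL_smul (a : ℂ) (B : Matrix n n ℂ) : adL (a • B) = a • adL B := by
  ext1 ρ
  simp only [adL_apply, _root_.smul_apply, smul_mul_assoc, mul_smul_comm]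
  module

theorem commute_adL {A B : Matrix n n ℂ} (h : Commute A B) : Commute (adL A) (adL B) := by
  ext1 ρ
  have hAB : A * (B * ρ) = B * (A * ρ) := by rw [← mul_assoc, h.eq, mul_assoc]
  have hBA : ρ * (B * A) = ρ * (A * B) := by rw [h.eq]
  simp only [mul_apply_eq_comp, adL_apply, mul_smul_comm, smul_mul_assoc, mul_sub, sub_mul,
    mul_assoc, hAB, hBA]
  module

theorem commute_adL_of_map_commutator {H : Matrix n n ℂ} {D : Matrix n n ℂ →L[ℂ] Matrix n n ℂ}
    (hD : ∀ ρ, D (H * ρ - ρ * H) = H * D ρ - D ρ * H) : Commute (adL H) D := by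
  ext1 ρ
  simp only [mul_apply_eq_comp, adL_apply, map_smul, hD]

end Commutator

theorem stmt16_general {d : ℕ}
    (H δH : Matrix (Fin d) (Fin d) ℂ)
    (hcomm : δH * H = H * δH)
    (D : Matrix (Fin d) (Fin d) ℂ →L[ℂ] Matrix (Fin d) (Fin d) ℂ)
    (hD : ∀ ρ, D (H * ρ - ρ * H) = H * D ρ - D ρ * H)
    (c : ℝ) (g : ℝ → ℝ) (hg : Continuous g)
    (Γ : ℝ → ℝ) (hΓ : ∀ t, Γ t = ∫ s in (0:ℝ)..t, (g s) ^ 2)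
    (L : ℝ → (Matrix (Fin d) (Fin d) ℂ →L[ℂ] Matrix (Fin d) (Fin d) ℂ))
    (hL : ∀ t, L t = adL ((c : ℂ) • H + ((g t : ℂ)) ^ 2 • δH) + ((g t : ℂ)) ^ 2 • D)
    (Λ : ℝ → (Matrix (Fin d) (Fin d) ℂ →L[ℂ] Matrix (Fin d) (Fin d) ℂ))
    (hΛ : ∀ t, Λ t = NormedSpace.exp
      (adL (((c * t : ℝ) : ℂ) • H + ((Γ t : ℝ) : ℂ) • δH) + ((Γ t : ℝ) : ℂ) • D)) :
    Λ 0 = 1 ∧ ∀ t : ℝ, HasDerivAt Λ ((L t).comp (Λ t)) t := by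
  set M := adL H
  set N := adL δH + D
  have hMN : Commute M N :=
    (commute_adL hcomm.symm).add_right (commute_adL_of_map_commutator hD)
  have hgen : ∀ a b : ℂ, adL (a • H + b • δH) + b • D = a • M + b • N := fun a b ↦ by
    rw [adL_add, adL_smul, adL_smul, smul_add, add_assoc]
  have hΛ' : Λ = fun t ↦ exp (((c * t : ℝ) : ℂ) • M + ((Γ t : ℝ) : ℂ) • N) :=
    funext fun t ↦ by rw [hΛ, hgen]
  have hΓ0 : Γ 0 = 0 := by rw [hΓ, intervalIntegral.integral_same]
  refine ⟨by simp [hΛ', hΓ0], fun t ↦ ?_⟩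
  have hΓ' : HasDerivAt Γ (g t ^ 2) t := by
    rw [funext hΓ]
    exact ((hg.pow 2).integral_hasStrictDerivAt 0 t).hasDerivAt
  have hct : HasDerivAt (fun u : ℝ ↦ c * u) c t := by
    simpa using (hasDerivAt_id t).const_mul c
  rw [hΛ']
  refine (hasDerivAt_exp_smul_add_smul hMN hct.ofReal_comp hΓ'.ofReal_comp).congr_deriv ?_
  rw [hL, hgen, ContinuousLinearMap.mul_def]
  push_cast
  rfl

/-- exponential solution of the commutative Master Equation:
with `Γ(t) = ∫_0^t g(s)² ds` and `ℋ_t = ctH + Γ(t)δH`, the family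
`Λ_t = exp(−i[ℋ_t,·] + Γ(t)D)` satisfies `Λ_0 = id` and `dΛ_t/dt = L_t ∘ Λ_t`. -/
theorem stmt16 {d : ℕ}
    (H δH : Matrix (Fin d) (Fin d) ℂ) (hH : Hᴴ = H) (hδH : δHᴴ = δH)
    (hcomm : δH * H = H * δH)
    (D : Matrix (Fin d) (Fin d) ℂ →L[ℂ] Matrix (Fin d) (Fin d) ℂ)
    (hD : ∀ ρ, D (H * ρ - ρ * H) = H * D ρ - D ρ * H)
    (c : ℝ) (g : ℝ → ℝ) (hg : Continuous g)
    (Γ : ℝ → ℝ) (hΓ : ∀ t, Γ t = ∫ s in (0:ℝ)..t, (g s) ^ 2)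
    (L : ℝ → (Matrix (Fin d) (Fin d) ℂ →L[ℂ] Matrix (Fin d) (Fin d) ℂ))
    (hL : ∀ t, L t = adL ((c : ℂ) • H + ((g t : ℂ)) ^ 2 • δH) + ((g t : ℂ)) ^ 2 • D)
    (Λ : ℝ → (Matrix (Fin d) (Fin d) ℂ →L[ℂ] Matrix (Fin d) (Fin d) ℂ))
    (hΛ : ∀ t, Λ t = NormedSpace.exp
      (adL (((c * t : ℝ) : ℂ) • H + ((Γ t : ℝ) : ℂ) • δH) + ((Γ t : ℝ) : ℂ) • D)) :
    Λ 0 = 1 ∧ ∀ t : ℝ, HasDerivAt Λ ((L t).comp (Λ t)) t :=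
  stmt16_general H δH hcomm D hD c g hg Γ hΓ L hL Λ hΛ
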